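/- The multiplicity sequence of the embedding k of the unknot in Figure 1 is (2,4,6,8,6,8,6,4,6,4,6,4,2) up to the stated thick/thin structure, with thick levels of multiplicities 8, 8, 6, 6, 6 and thin levels of multiplicities 6, 6, 4, 4; its width is strictly greater than the width of the unknot, which is 2. -/

import Mathlib

/-- A multiplicity sequence of a Morse embedding of a knot: a finite sequence of
positive even integers, starting and ending at 2, with consecutive entries
differing by exactly 2. -/
def IsMultSeq (l : List ℕ) : Prop :=
  l ≠ [] ∧ (∀ m ∈ l, 0 < m ∧ Even m) ∧ l.head? = some 2 ∧ l.getLast? = some 2 ∧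
  ∀ i, i + 1 < l.length →
    (l.getD (i+1) 0 = l.getD i 0 + 2 ∨ l.getD i 0 = l.getD (i+1) 0 + 2)

/-- The number of local-maximum entries (thick levels) of a multiplicity
sequence, with boundary convention that the sequence is padded by 0. -/
def maxCount (l : List ℕ) : ℕ :=
  (List.range l.length).countP fun i =>
    decide ((if i = 0 then 0 else l.getD (i - 1) 0) < l.getD i 0 ∧
      l.getD (i + 1) 0 < l.getD i 0)

/-- The multiplicity sequence of the embedding of the unknot in Figure 1. -/
def fig1 : List ℕ := [2, 4, 6, 8, 6, 8, 6, 4, 6, 4, 6, 4, 2]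

theorem maxCount_le_length (l : List ℕ) : maxCount l ≤ l.length :=
  List.countP_le_length.trans_eq List.length_range

theorem IsMultSeq.two_le_of_mem {l : List ℕ} (hl : IsMultSeq l) {m : ℕ} (hm : m ∈ l) :
    2 ≤ m := by
  obtain ⟨hpos, k, rfl⟩ := hl.2.1 m hm
  omega

theorem IsMultSeq.two_mul_length_le_sum {l : List ℕ} (hl : IsMultSeq l) :
    2 * l.length ≤ l.sum := by
  simpa [mul_comm] using List.card_nsmul_le_sum l 2 fun _ => hl.two_le_of_mem

theorem isMultSeq_fig1 : IsMultSeq fig1 := by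
  refine ⟨by decide, by decide, rfl, rfl, fun i hi => ?_⟩
  replace hi : i < 12 := by simp only [fig1, List.length_cons, List.length_nil] at hi; omega
  interval_cases i <;> decide

theorem isMultSeq_singleton_two : IsMultSeq [2] :=
  ⟨List.cons_ne_nil _ _, by decide, rfl, rfl, fun i hi => by simp at hi⟩

/-- The Figure 1 embedding of the unknot is a valid multiplicity sequence whose
width strictly exceeds 2 = w(unknot); indeed any multiplicity sequence with at
least two thick levels has width greater than 2, so such an embedding is not a
global minimum of the width complex. -/
theorem fig1_width_exceeds_unknot :
    IsMultSeq fig1 ∧ IsMultSeq [2] ∧ ([2] : List ℕ).sum = 2 ∧ 2 < fig1.sum ∧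
    (∀ l : List ℕ, IsMultSeq l → 2 ≤ maxCount l → 2 < l.sum) := by
  refine ⟨isMultSeq_fig1, isMultSeq_singleton_two, rfl, by decide, fun l hl hmax => ?_⟩
  calc 2 < 2 * 2 := by norm_num
    _ ≤ 2 * l.length := Nat.mul_le_mul_left 2 (hmax.trans (maxCount_le_length l))
    _ ≤ l.sum := hl.two_mul_length_le_sum
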